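/- Let P, Q be probability distributions on a finite alphabet X, let X ∼ P, and suppose that conditional on X = x, the observations Y_1, …, Y_m are i.i.d. with a common conditional law K_x ∈ Δ(X), and that the marginal constraint ∑_{x∈X} P(x)·K_x = Q holds (so each Y_i ∼ Q). Then H(X | Y_1,…,Y_m) = 0 for some finite m in this conditionally i.i.d. model if and only if H_1(P‖Q) = 0, i.e., if and only if there exists a coupling of X ∼ P and a single Y ∼ Q with H(X|Y) = 0. -/

import Mathlib

open scoped Classical BigOperators

noncomputable section

/-- `P` is a probability distribution on the finite type `α`. -/
def IsProbDist {α : Type*} [Fintype α] (P : α → ℝ) : Prop :=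
  (∀ x, 0 ≤ P x) ∧ ∑ x, P x = 1

/-- Shannon conditional entropy `H(X | Y)` of a joint pmf `π`
(first coordinate `X`, second coordinate `Y`), with the convention `0 log 0 = 0`. -/
def condEnt {α β : Type*} [Fintype α] [Fintype β] (π : α → β → ℝ) : ℝ :=
  - ∑ y : β, ∑ x : α, π x y * Real.log (π x y / ∑ x' : α, π x' y)

/-- `π` is a joint distribution of `(X, (Y_i)_{i : ι})` with `X ∼ P` and `Y_i ∼ Q i`. -/
def IsCouplingList {α ι : Type*} {β : ι → Type*} [Fintype α] [Fintype ι]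
    [∀ i, Fintype (β i)] (π : α → ((i : ι) → β i) → ℝ)
    (P : α → ℝ) (Q : (i : ι) → β i → ℝ) : Prop :=
  (∀ x y, 0 ≤ π x y) ∧ (∀ x, ∑ y, π x y = P x) ∧
    (∀ i b, (∑ x, ∑ y, if y i = b then π x y else 0) = Q i b)

/-- Minimum list entropy coupling `H(P ‖ Q_1, …, Q_m)`: the infimum of the
conditional entropy `H(X | Y_1, …, Y_m)` over all couplings with `X ∼ P`, `Y_i ∼ Q i`. -/
def Hlist {α ι : Type*} {β : ι → Type*} [Fintype α] [Fintype ι] [∀ i, Fintype (β i)]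
    (P : α → ℝ) (Q : (i : ι) → β i → ℝ) : ℝ :=
  sInf {h | ∃ π : α → ((i : ι) → β i) → ℝ, IsCouplingList π P Q ∧ condEnt π = h}

/-- Homogeneous minimum list entropy coupling `H_m(P ‖ Q)`. -/
def Hm {α β : Type*} [Fintype α] [Fintype β] (m : ℕ) (P : α → ℝ) (Q : β → ℝ) : ℝ :=
  Hlist (β := fun _ : Fin m => β) P (fun _ => Q)

section Aux

variable {α β : Type*} [Fintype α] [Fintype β]

lemma le_colsum (π : α → β → ℝ) (h : ∀ x y, 0 ≤ π x y) (x : α) (y : β) :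
    π x y ≤ ∑ x', π x' y :=
  Finset.single_le_sum (fun i _ => h i y) (Finset.mem_univ x)

lemma term_nonpos (π : α → β → ℝ) (h : ∀ x y, 0 ≤ π x y) (x : α) (y : β) :
    π x y * Real.log (π x y / ∑ x', π x' y) ≤ 0 := by
  rcases (h x y).eq_or_lt with h0 | hpos
  · simp [← h0]
  · have hs : 0 < ∑ x', π x' y := lt_of_lt_of_le hpos (le_colsum π h x y)
    have hr1 : π x y / ∑ x', π x' y ≤ 1 := (div_le_one hs).mpr (le_colsum π h x y)
    exact mul_nonpos_of_nonneg_of_nonpos hpos.le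
      (Real.log_nonpos (le_of_lt (div_pos hpos hs)) hr1)

lemma condEnt_nonneg (π : α → β → ℝ) (h : ∀ x y, 0 ≤ π x y) : 0 ≤ condEnt π := by
  unfold condEnt
  rw [neg_nonneg]
  exact Finset.sum_nonpos fun y _ => Finset.sum_nonpos fun x _ => term_nonpos π h x y

lemma condEnt_eq_zero_iff (π : α → β → ℝ) (h : ∀ x y, 0 ≤ π x y) :
    condEnt π = 0 ↔ ∀ x y, π x y = 0 ∨ π x y = ∑ x', π x' y := by
  unfold condEnt
  rw [neg_eq_zero]
  rw [Finset.sum_eq_zero_iff_of_nonpos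
    (fun y _ => Finset.sum_nonpos fun x _ => term_nonpos π h x y)]
  constructor
  · intro hz x y
    have hy := hz y (Finset.mem_univ y)
    have hx := (Finset.sum_eq_zero_iff_of_nonpos (fun x _ => term_nonpos π h x y)).mp hy
      x (Finset.mem_univ x)
    rcases (h x y).eq_or_lt with h0 | hpos
    · exact Or.inl h0.symm
    · have hs : 0 < ∑ x', π x' y := lt_of_lt_of_le hpos (le_colsum π h x y)
      rcases mul_eq_zero.mp hx with h1 | h1
      · exact Or.inl h1
      · rcases Real.log_eq_zero.mp h1 with h2 | h2 | h2
        · exact absurd h2 (ne_of_gt (div_pos hpos hs))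
        · right
          have := (div_eq_iff hs.ne').mp h2
          linarith
        · exact absurd h2 (by nlinarith [div_pos hpos hs])
  · intro hz y _
    apply Finset.sum_eq_zero
    intro x _
    rcases hz x y with h0 | h0
    · rw [h0, zero_mul]
    · rcases (h x y).eq_or_lt with h1 | h1
      · rw [← h1, zero_mul]
      · have hs : 0 < ∑ x', π x' y := lt_of_lt_of_le h1 (le_colsum π h x y)
        rw [h0, div_self hs.ne', Real.log_one, mul_zero]

end Aux

section Main

set_option linter.unusedSectionVars false

variable {α β : Type*} [Fintype α] [Fintype β]

lemma quant (P Q : α → ℝ) (σ : α → α → ℝ)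
    (hnn : ∀ x b, 0 ≤ σ x b) (hrow : ∀ x, ∑ b, σ x b = P x)
    (hcol : ∀ b, ∑ x, σ x b = Q b) (f : α → α)
    (hf : ∀ b x, σ x b ≤ σ (f b) b) (x : α) :
    |P x - ∑ b, if f b = x then Q b else 0| ≤ (Fintype.card α : ℝ)^2 * condEnt σ := by
  have hα : Nonempty α := ⟨x⟩
  set n : ℝ := (Fintype.card α : ℝ) with hn
  have hn0 : 0 < n := by rw [hn]; exact_mod_cast Fintype.card_pos
  have hε0 : 0 ≤ condEnt σ := condEnt_nonneg σ hnn
  set ε := condEnt σ with hε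
  have hTnp : ∀ x' b, σ x' b * Real.log (σ x' b / Q b) ≤ 0 := by
    intro x' b
    have := term_nonpos σ hnn x' b
    rwa [hcol b] at this
  have hce : ε = ∑ b, ∑ x', -(σ x' b * Real.log (σ x' b / Q b)) := by
    rw [hε]
    unfold condEnt
    simp only [hcol]
    simp only [Finset.sum_neg_distrib]
  have hterm : ∀ x' b, -(σ x' b * Real.log (σ x' b / Q b)) ≤ ε := by
    intro x' b
    rw [hce]
    calc -(σ x' b * Real.log (σ x' b / Q b))
        ≤ ∑ x'', -(σ x'' b * Real.log (σ x'' b / Q b)) :=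
          Finset.single_le_sum (fun i _ => neg_nonneg.mpr (hTnp i b)) (Finset.mem_univ x')
      _ ≤ ∑ b', ∑ x'', -(σ x'' b' * Real.log (σ x'' b' / Q b')) :=
          Finset.single_le_sum
            (fun b' _ => Finset.sum_nonneg fun i _ => neg_nonneg.mpr (hTnp i b'))
            (Finset.mem_univ b)
  have hps : ∀ b, σ (f b) b ≤ Q b := by
    intro b; have := le_colsum σ hnn (f b) b; rwa [hcol b] at this
  have hQnn : ∀ b, 0 ≤ Q b := by
    intro b; rw [← hcol b]; exact Finset.sum_nonneg fun i _ => hnn i b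
  have hsnp : ∀ b, Q b ≤ n * σ (f b) b := by
    intro b
    rw [← hcol b]
    calc ∑ x', σ x' b ≤ ∑ _x' : α, σ (f b) b := Finset.sum_le_sum fun i _ => hf b i
      _ = n * σ (f b) b := by
          rw [Finset.sum_const, Finset.card_univ, nsmul_eq_mul, hn]
  have hkey : ∀ b, Q b - σ (f b) b ≤ n * ε := by
    intro b
    rcases (hnn (f b) b).eq_or_lt with hp | hp
    · have h1 : Q b ≤ 0 := by have := hsnp b; rw [← hp] at this; linarith
      have h2 := hQnn b
      nlinarith
    · have hs : 0 < Q b := lt_of_lt_of_le hp (hps b)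
      have hlog : Real.log (σ (f b) b / Q b) ≤ σ (f b) b / Q b - 1 :=
        Real.log_le_sub_one_of_pos (div_pos hp hs)
      have h1 : σ (f b) b * (1 - σ (f b) b / Q b) ≤ ε := by
        have h2 : σ (f b) b * Real.log (σ (f b) b / Q b)
            ≤ σ (f b) b * (σ (f b) b / Q b - 1) :=
          mul_le_mul_of_nonneg_left hlog hp.le
        have h3 := hterm (f b) b
        nlinarith
      have h3 : σ (f b) b * (Q b - σ (f b) b) ≤ ε * Q b := by
        have h4 : σ (f b) b * (1 - σ (f b) b / Q b) * Q b ≤ ε * Q b :=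
          mul_le_mul_of_nonneg_right h1 hs.le
        calc σ (f b) b * (Q b - σ (f b) b)
            = σ (f b) b * (1 - σ (f b) b / Q b) * Q b := by field_simp
          _ ≤ ε * Q b := h4
      nlinarith [mul_le_mul_of_nonneg_right (hsnp b) (sub_nonneg.mpr (hps b)),
        mul_le_mul_of_nonneg_left h3 hn0.le, hs, hps b]
  have hoff : ∀ b x', x' ≠ f b → σ x' b ≤ n * ε := by
    intro b x' hne
    have hpair : σ x' b + σ (f b) b ≤ Q b := by
      have h5 : ∑ i ∈ ({x', f b} : Finset α), σ i b ≤ ∑ i : α, σ i b :=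
        Finset.sum_le_sum_of_subset_of_nonneg (Finset.subset_univ _) (fun i _ _ => hnn i b)
      rw [Finset.sum_pair hne, hcol b] at h5
      exact h5
    linarith [hkey b]
  have hmain : ∀ b, |σ x b - (if f b = x then Q b else 0)| ≤ n * ε := by
    intro b
    by_cases hb : f b = x
    · rw [if_pos hb, ← hb, abs_of_nonpos (by linarith [hps b])]
      linarith [hkey b]
    · rw [if_neg hb, sub_zero, abs_of_nonneg (hnn x b)]
      exact hoff b x (fun hh => hb hh.symm)
  calc |P x - ∑ b, if f b = x then Q b else 0|
      = |∑ b, (σ x b - (if f b = x then Q b else 0))| := by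
        rw [Finset.sum_sub_distrib, hrow x]
    _ ≤ ∑ b, |σ x b - (if f b = x then Q b else 0)| := Finset.abs_sum_le_sum_abs _ _
    _ ≤ ∑ _b : α, n * ε := Finset.sum_le_sum fun b _ => hmain b
    _ = n * (n * ε) := by rw [Finset.sum_const, Finset.card_univ, nsmul_eq_mul, hn]
    _ = n^2 * ε := by ring

lemma sum_fin_one_aux {M : Type*} [AddCommMonoid M] (g : (Fin 1 → α) → M) :
    ∑ y, g y = ∑ b, g (fun _ => b) :=
  Fintype.sum_equiv (Equiv.funUnique (Fin 1) α) g (fun b => g (fun _ => b))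
    (fun y => congrArg g (funext fun i => congrArg y (Subsingleton.elim _ _)))

lemma sum_fin_one {M : Type*} [AddCommMonoid M] {I : Fintype (Fin 1 → α)}
    (g : (Fin 1 → α) → M) :
    @Finset.sum _ M _ (@Finset.univ _ I) g = ∑ b, g (fun _ => b) := by
  have hI : I = Pi.instFintype := Subsingleton.elim _ _
  subst hI
  exact sum_fin_one_aux g

/-- The square-matrix description of the `m = 1` coupling set. -/
lemma Hm_one_eq (P Q : α → ℝ) :
    Hm 1 P Q = sInf {h | ∃ σ : α → α → ℝ, (∀ x b, 0 ≤ σ x b) ∧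
      (∀ x, ∑ b, σ x b = P x) ∧ (∀ b, ∑ x, σ x b = Q b) ∧ condEnt σ = h} := by
  unfold Hm Hlist
  congr 1
  ext h
  simp only [Set.mem_setOf_eq]
  constructor
  · rintro ⟨π, hπ, rfl⟩
    refine ⟨fun x b => π x (fun _ => b), fun x b => hπ.1 x _, ?_, ?_, ?_⟩
    · intro x
      have h1 := hπ.2.1 x
      rwa [sum_fin_one] at h1
    · intro b
      have h2 := hπ.2.2 0 b
      simp only [sum_fin_one] at h2
      simpa using h2
    · unfold condEnt
      rw [sum_fin_one]
  · rintro ⟨σ, h1, h2, h3, rfl⟩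
    refine ⟨fun x y => σ x (y 0), ⟨fun x y => h1 x (y 0), ?_, ?_⟩, ?_⟩
    · intro x
      rw [sum_fin_one]
      exact h2 x
    · intro i b
      have hi : i = 0 := Subsingleton.elim i 0
      subst hi
      simp only [sum_fin_one]
      simpa using h3 b
    · unfold condEnt
      rw [sum_fin_one]

lemma nonempty_of_prob {P : α → ℝ} (hP : IsProbDist P) : Nonempty α := by
  by_contra hn
  rw [not_nonempty_iff] at hn
  have h1 := hP.2
  rw [Finset.univ_eq_empty, Finset.sum_empty] at h1
  norm_num at h1

lemma agg_of_exists (P Q : α → ℝ) (hP : IsProbDist P)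
    (m : ℕ) (K : α → α → ℝ) (hK : ∀ x, IsProbDist (K x))
    (hmarg : ∀ y, ∑ x, P x * K x y = Q y)
    (hent : condEnt (fun x (y : Fin m → α) => P x * ∏ i, K x (y i)) = 0) :
    ∃ f : α → α, ∀ x, P x = ∑ b, if f b = x then Q b else 0 := by
  have hα : Nonempty α := nonempty_of_prob hP
  have hnn : ∀ (x : α) (y : Fin m → α), 0 ≤ P x * ∏ i, K x (y i) :=
    fun x y => mul_nonneg (hP.1 x) (Finset.prod_nonneg fun i _ => (hK x).1 (y i))
  have hzc : ∀ (x : α) (y : Fin m → α), P x * ∏ i, K x (y i) = 0 ∨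
      P x * ∏ i, K x (y i) = ∑ x', P x' * ∏ i, K x' (y i) :=
    (condEnt_eq_zero_iff _ hnn).mp hent
  have huniq : ∀ (b : α) (x₁ x₂ : α), 0 < P x₁ * K x₁ b → 0 < P x₂ * K x₂ b → x₁ = x₂ := by
    intro b x₁ x₂ h1 h2
    by_contra hne
    have hpos : ∀ x', 0 < P x' * K x' b →
        0 < P x' * ∏ i : Fin m, K x' ((fun _ : Fin m => b) i) := by
      intro x' hx'
      rcases mul_pos_iff.mp hx' with ⟨hp, hk⟩ | ⟨hp, _⟩
      · have hpr : (∏ i : Fin m, K x' ((fun _ : Fin m => b) i)) = K x' b ^ m := by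
          simp [Finset.prod_const, Finset.card_univ]
        rw [hpr]
        exact mul_pos hp (pow_pos hk m)
      · exact absurd hp (not_lt.mpr (hP.1 x'))
    have h1' := hpos x₁ h1
    have h2' := hpos x₂ h2
    have e1 : P x₁ * ∏ i : Fin m, K x₁ ((fun _ : Fin m => b) i)
        = ∑ x', P x' * ∏ i : Fin m, K x' ((fun _ : Fin m => b) i) := by
      rcases hzc x₁ (fun _ => b) with h0 | h0
      · exact absurd h0 h1'.ne'
      · exact h0
    have hpair : P x₁ * (∏ i : Fin m, K x₁ ((fun _ : Fin m => b) i))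
        + P x₂ * (∏ i : Fin m, K x₂ ((fun _ : Fin m => b) i))
        ≤ ∑ x', P x' * ∏ i : Fin m, K x' ((fun _ : Fin m => b) i) := by
      have h5 : ∑ i ∈ ({x₁, x₂} : Finset α),
          (P i * ∏ j : Fin m, K i ((fun _ : Fin m => b) j))
          ≤ ∑ i : α, P i * ∏ j : Fin m, K i ((fun _ : Fin m => b) j) :=
        Finset.sum_le_sum_of_subset_of_nonneg (Finset.subset_univ _)
          (fun i _ _ => hnn i _)
      rw [Finset.sum_pair hne] at h5
      exact h5
    linarith [h1', h2', e1, hpair]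
  have hfex : ∀ b : α, ∃ x : α, (∃ x', 0 < P x' * K x' b) → 0 < P x * K x b := by
    intro b
    by_cases hE : ∃ x', 0 < P x' * K x' b
    · obtain ⟨x', hx'⟩ := hE
      exact ⟨x', fun _ => hx'⟩
    · exact ⟨Classical.arbitrary α, fun hc => absurd hc hE⟩
  choose f hfch using hfex
  have hfspec : ∀ b x, f b ≠ x → P x * K x b = 0 := by
    intro b x hne
    by_contra h0
    have hx : 0 < P x * K x b :=
      lt_of_le_of_ne (mul_nonneg (hP.1 x) ((hK x).1 b)) (Ne.symm h0)
    have hfb : 0 < P (f b) * K (f b) b := hfch b ⟨x, hx⟩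
    exact hne (huniq b (f b) x hfb hx)
  refine ⟨f, fun x => ?_⟩
  have hbx : ∀ b, (if f b = x then Q b else 0) = P x * K x b := by
    intro b
    by_cases hb : f b = x
    · rw [if_pos hb, ← hmarg b]
      exact Finset.sum_eq_single x
        (fun x' _ hx' => hfspec b x' (fun heq => hx' (heq.symm.trans hb)))
        (fun hx => absurd (Finset.mem_univ x) hx)
    · rw [if_neg hb]
      exact (hfspec b x hb).symm
  have hfin : ∑ b, (if f b = x then Q b else 0) = P x := by
    rw [Finset.sum_congr rfl fun b _ => hbx b, ← Finset.mul_sum, (hK x).2, mul_one]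
  exact hfin.symm

lemma exists_of_agg (P Q : α → ℝ) (hP : IsProbDist P) (hQ : IsProbDist Q)
    (f : α → α) (hf : ∀ x, P x = ∑ b, if f b = x then Q b else 0) :
    ∃ (m : ℕ) (K : α → α → ℝ), (∀ x, IsProbDist (K x)) ∧
      (∀ y, ∑ x, P x * K x y = Q y) ∧
      condEnt (fun x (y : Fin m → α) => P x * ∏ i, K x (y i)) = 0 := by
  have hQzero : ∀ b, ¬ (0 < P (f b)) → Q b = 0 := by
    intro b hb
    have hPfb : P (f b) = 0 := le_antisymm (not_lt.mp hb) (hP.1 (f b))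
    have hle : Q b ≤ ∑ b', if f b' = f b then Q b' else 0 := by
      have h5 := Finset.single_le_sum (f := fun b' => if f b' = f b then Q b' else 0)
        (fun b' _ => by split_ifs; exacts [hQ.1 b', le_refl 0])
        (Finset.mem_univ b)
      simpa using h5
    rw [← hf (f b), hPfb] at hle
    exact le_antisymm hle (hQ.1 b)
  set K : α → α → ℝ :=
    fun x b => if 0 < P x then (if f b = x then Q b else 0) / P x else Q b with hKdef
  have hPK : ∀ x b, P x * K x b = (if f b = x then Q b else 0) := by
    intro x b
    rw [hKdef]
    by_cases hx : 0 < P x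
    · simp only [if_pos hx]
      rw [mul_comm, div_mul_cancel₀ _ hx.ne']
    · have hx0 : P x = 0 := le_antisymm (not_lt.mp hx) (hP.1 x)
      simp only [if_neg hx]
      rw [hx0, zero_mul]
      split_ifs with hb
      · exact (hQzero b (by rwa [hb])).symm
      · rfl
  have hKprob : ∀ x, IsProbDist (K x) := by
    intro x
    rw [hKdef]
    by_cases hx : 0 < P x
    · constructor
      · intro b
        simp only [if_pos hx]
        apply div_nonneg _ hx.le
        split_ifs
        exacts [hQ.1 b, le_refl 0]
      · simp only [if_pos hx]
        rw [← Finset.sum_div, ← hf x, div_self hx.ne']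
    · constructor
      · intro b
        simp only [if_neg hx]
        exact hQ.1 b
      · simp only [if_neg hx]
        exact hQ.2
  have hmarg : ∀ b, ∑ x, P x * K x b = Q b := by
    intro b
    rw [Finset.sum_congr rfl fun x _ => hPK x b]
    simp [Finset.sum_ite_eq]
  refine ⟨1, K, hKprob, hmarg, ?_⟩
  rw [condEnt_eq_zero_iff _
    (fun x y => mul_nonneg (hP.1 x) (Finset.prod_nonneg fun i _ => (hKprob x).1 (y i)))]
  intro x y
  have hcol : ∑ x', P x' * ∏ i : Fin 1, K x' (y i) = Q (y 0) := by
    rw [Finset.sum_congr rfl fun x' _ => by rw [Fin.prod_univ_one (fun i => K x' (y i))]]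
    exact hmarg (y 0)
  rw [Fin.prod_univ_one (fun i => K x (y i)), hcol, hPK x (y 0)]
  split_ifs with hcase
  · exact Or.inr rfl
  · exact Or.inl rfl

lemma hm_of_agg (P Q : α → ℝ) (hQ : IsProbDist Q)
    (f : α → α) (hf : ∀ x, P x = ∑ b, if f b = x then Q b else 0) :
    Hm 1 P Q = 0 := by
  rw [Hm_one_eq]
  have hnn : ∀ (x b : α), (0:ℝ) ≤ if f b = x then Q b else 0 := by
    intro x b; split_ifs; exacts [hQ.1 _, le_refl 0]
  have hcol : ∀ b, ∑ x, (if f b = x then Q b else 0) = Q b := by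
    intro b; simp [Finset.sum_ite_eq]
  have hce : condEnt (fun (x b : α) => if f b = x then Q b else 0) = 0 := by
    rw [condEnt_eq_zero_iff _ (fun x b => hnn x b)]
    intro x b
    rw [hcol b]
    split_ifs with hcase
    · exact Or.inr rfl
    · exact Or.inl rfl
  refine IsLeast.csInf_eq ⟨⟨fun x b => if f b = x then Q b else 0,
    hnn, fun x => (hf x).symm, hcol, hce⟩, ?_⟩
  rintro h ⟨σ, h1, h2, h3, rfl⟩
  exact condEnt_nonneg σ h1

lemma agg_of_hm (P Q : α → ℝ) (hP : IsProbDist P) (hQ : IsProbDist Q)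
    (h : Hm 1 P Q = 0) :
    ∃ f : α → α, ∀ x, P x = ∑ b, if f b = x then Q b else 0 := by
  have hα : Nonempty α := nonempty_of_prob hP
  rw [Hm_one_eq] at h
  set n : ℝ := (Fintype.card α : ℝ) with hn
  have hn0 : 0 < n := by rw [hn]; exact_mod_cast Fintype.card_pos
  by_contra hno
  push_neg at hno
  set F : (α → α) → ℝ := fun f => ∑ x, |P x - ∑ b, if f b = x then Q b else 0| with hF
  have hFpos : ∀ f, 0 < F f := by
    intro f
    obtain ⟨x₀, hx₀⟩ := hno f
    rw [hF]
    exact Finset.sum_pos' (fun i _ => abs_nonneg _)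
      ⟨x₀, Finset.mem_univ x₀, abs_pos.mpr (sub_ne_zero.mpr hx₀)⟩
  have hfun : Nonempty (α → α) := ⟨fun a => a⟩
  set δ : ℝ := Finset.univ.inf' Finset.univ_nonempty F with hδdef
  have hδ : 0 < δ := by
    rw [hδdef, Finset.lt_inf'_iff]
    exact fun f _ => hFpos f
  have hε₀ : 0 < δ / (n^3 + 1) := div_pos hδ (by positivity)
  have hSne : {h | ∃ σ : α → α → ℝ, (∀ x b, 0 ≤ σ x b) ∧
      (∀ x, ∑ b, σ x b = P x) ∧ (∀ b, ∑ x, σ x b = Q b) ∧ condEnt σ = h}.Nonempty := by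
    refine ⟨condEnt (fun (x b : α) => P x * Q b), fun x b => P x * Q b,
      fun x b => mul_nonneg (hP.1 x) (hQ.1 b), ?_, ?_, rfl⟩
    · intro x
      rw [← Finset.mul_sum, hQ.2, mul_one]
    · intro b
      rw [← Finset.sum_mul, hP.2, one_mul]
  obtain ⟨h', ⟨σ, h1, h2, h3, hπe⟩, hlt⟩ :=
    exists_lt_of_csInf_lt hSne (by rw [h]; exact hε₀)
  have hargmax : ∀ b : α, ∃ x₀ : α, ∀ x', σ x' b ≤ σ x₀ b := by
    intro b
    obtain ⟨x₀, -, hx₀⟩ := Finset.exists_max_image (Finset.univ : Finset α)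
      (fun x' => σ x' b) Finset.univ_nonempty
    exact ⟨x₀, fun x' => hx₀ x' (Finset.mem_univ x')⟩
  choose f hfmax using hargmax
  have hq := quant P Q σ h1 h2 h3 f (fun b x' => hfmax b x')
  have hFf : F f ≤ n^3 * h' := by
    rw [hF]
    calc ∑ x, |P x - ∑ b, if f b = x then Q b else 0|
        ≤ ∑ _x : α, n^2 * h' := Finset.sum_le_sum fun x _ => by
          have h6 := hq x; rw [hπe] at h6; exact h6
      _ = n * (n^2 * h') := by rw [Finset.sum_const, Finset.card_univ, nsmul_eq_mul, hn]
      _ = n^3 * h' := by ring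
  have hδle : δ ≤ F f := by
    rw [hδdef]
    exact Finset.inf'_le F (Finset.mem_univ f)
  have hx1 : n^3 * (δ / (n^3+1)) < δ := by
    rw [mul_div_assoc', div_lt_iff₀ (by positivity)]
    nlinarith
  have hx2 : n^3 * h' < n^3 * (δ / (n^3+1)) :=
    mul_lt_mul_of_pos_left hlt (by positivity)
  linarith


end Main

/-- conditionally i.i.d. couplings: for `P, Q ∈ Δ(X)`, there exist a finite
`m` and a conditionally i.i.d. coupling — i.e. kernels `K_x ∈ Δ(X)` with
`∑_x P(x)·K_x = Q` and joint law `π(x, y^m) = P(x)·∏_i K_x(y_i)` — achieving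
`H(X | Y_1,…,Y_m) = 0`, if and only if `H_1(P‖Q) = 0`. -/
theorem cond_iid_exact_recovery_iff {α : Type*} [Fintype α]
    (P Q : α → ℝ) (hP : IsProbDist P) (hQ : IsProbDist Q) :
    (∃ (m : ℕ) (K : α → α → ℝ), (∀ x, IsProbDist (K x)) ∧
        (∀ y, ∑ x, P x * K x y = Q y) ∧
        condEnt (fun x (y : Fin m → α) => P x * ∏ i, K x (y i)) = 0)
      ↔ Hm 1 P Q = 0 := by
  constructor
  · rintro ⟨m, K, hK, hmarg, hent⟩
    obtain ⟨f, hf⟩ := agg_of_exists P Q hP m K hK hmarg hent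
    exact hm_of_agg P Q hQ f hf
  · intro h
    obtain ⟨f, hf⟩ := agg_of_hm P Q hP hQ h
    exact exists_of_agg P Q hP hQ f hf

end
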